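/- arXiv:0802.0030 — 3 statements merged into one kernel-verified Lean document; each statement's English description precedes it below -/
import Mathlib

section
/- Let X, W1, W2 be random variables on a probability space with values in finite nonempty sets, and let c, d be real numbers with 0 ≤ c ≤ d. Suppose H(X) = d, H(X | W1, W2) = 0, H(W1) ≤ c, and H(W2) ≤ d − c. Then H(W1) = c, H(W2) = d − c, I(W1 ; W2) = 0, H(W1, W2) = d, and H(W1, W2 | X) = 0 (so the pair (W1, W2) is a function of X). -/
/-!
The chain `H(X) ≤ H(X, W) = H(W) ≤ H(W₁) + H(W₂) ≤ c + (d - c) = d`, with `W = (W₁, W₂)`, starts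
and ends at `d`, so every inequality in it is an equality. The only non-trivial input is
subadditivity of entropy, which is Gibbs' inequality comparing the joint law with the product of
its marginals.
-/

open MeasureTheory ProbabilityTheory

/-- Shannon entropy (natural logarithm) of a random variable with values in a finite type,
computed from the law `μ.map X`. -/
noncomputable def ent {Ω : Type*} [MeasurableSpace Ω] {S : Type*} [Fintype S] [MeasurableSpace S]
    (μ : Measure Ω) (X : Ω → S) : ℝ :=
  ∑ s : S, Real.negMulLog ((μ.map X) {s}).toReal

/-- Conditional entropy `H(X | Y) = H(X, Y) - H(Y)`. -/
noncomputable def condEnt {Ω S T : Type*} [MeasurableSpace Ω] [Fintype S] [MeasurableSpace S]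
    [Fintype T] [MeasurableSpace T] (μ : Measure Ω) (X : Ω → S) (Y : Ω → T) : ℝ :=
  ent μ (fun ω => (X ω, Y ω)) - ent μ Y

/-- Mutual information `I(X ; Y) = H(X) + H(Y) - H(X, Y)`. -/
noncomputable def mutInfo {Ω S T : Type*} [MeasurableSpace Ω] [Fintype S] [MeasurableSpace S]
    [Fintype T] [MeasurableSpace T] (μ : Measure Ω) (X : Ω → S) (Y : Ω → T) : ℝ :=
  ent μ X + ent μ Y - ent μ (fun ω => (X ω, Y ω))

/-- Conditional mutual information `I(X ; Y | Z) = H(X | Z) + H(Y | Z) - H(X, Y | Z)`. -/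
noncomputable def condMutInfo {Ω S T U : Type*} [MeasurableSpace Ω] [Fintype S] [MeasurableSpace S]
    [Fintype T] [MeasurableSpace T] [Fintype U] [MeasurableSpace U]
    (μ : Measure Ω) (X : Ω → S) (Y : Ω → T) (Z : Ω → U) : ℝ :=
  condEnt μ X Z + condEnt μ Y Z - condEnt μ (fun ω => (X ω, Y ω)) Z

open Real

section NegMulLog

variable {ι : Type*} (s : Finset ι)

lemma negMulLog_add_mul_log_le_sub {p q : ℝ} (hp : 0 ≤ p) (hq : 0 ≤ q) (hpq : q = 0 → p = 0) :
    negMulLog p + p * log q ≤ q - p := by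
  rcases hp.eq_or_lt with rfl | hp
  · simpa using hq
  have hq : 0 < q := hq.lt_of_ne fun h => hp.ne' (hpq h.symm)
  have hlog := log_le_sub_one_of_pos (div_pos hq hp)
  rw [log_div hq.ne' hp.ne'] at hlog
  have := mul_le_mul_of_nonneg_left hlog hp.le
  rw [show p * (q / p - 1) = q - p by field_simp] at this
  rw [negMulLog, neg_mul]
  linarith

lemma sum_negMulLog_le_neg_sum_mul_log {p q : ι → ℝ} (hp : ∀ i ∈ s, 0 ≤ p i)
    (hq : ∀ i ∈ s, 0 ≤ q i) (hpq : ∀ i ∈ s, q i = 0 → p i = 0)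
    (hsum : ∑ i ∈ s, q i ≤ ∑ i ∈ s, p i) :
    ∑ i ∈ s, negMulLog (p i) ≤ -∑ i ∈ s, p i * log (q i) := by
  have := Finset.sum_le_sum fun i hi =>
    negMulLog_add_mul_log_le_sub (hp i hi) (hq i hi) (hpq i hi)
  rw [Finset.sum_add_distrib, Finset.sum_sub_distrib] at this
  linarith

lemma negMulLog_sum_le_sum_negMulLog {x : ι → ℝ} (hx : ∀ i ∈ s, 0 ≤ x i) :
    negMulLog (∑ i ∈ s, x i) ≤ ∑ i ∈ s, negMulLog (x i) := by
  rw [negMulLog, neg_mul, Finset.sum_mul, ← Finset.sum_neg_distrib]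
  refine Finset.sum_le_sum fun i hi => ?_
  rcases (hx i hi).eq_or_lt with h | h
  · simp [← h]
  rw [negMulLog, neg_mul, neg_le_neg_iff]
  exact mul_le_mul_of_nonneg_left
    (log_le_log h (Finset.single_le_sum hx hi)) h.le

end NegMulLog

namespace MeasureTheory.Measure

variable {A B : Type*} [MeasurableSpace A] [MeasurableSingletonClass A]
  [MeasurableSpace B] [MeasurableSingletonClass B] (ν : Measure (A × B)) [IsFiniteMeasure ν]

lemma fst_real_singleton [Fintype B] (a : A) : ν.fst.real {a} = ∑ b, ν.real {(a, b)} := by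
  have : Prod.fst ⁻¹' {a} = (({a} ×ˢ Finset.univ : Finset (A × B)) : Set (A × B)) := by
    ext ⟨x, y⟩; simp [eq_comm]
  rw [fst, map_measureReal_apply measurable_fst (measurableSet_singleton a), this,
    ← sum_measureReal_singleton, Finset.sum_product, Finset.sum_singleton]

lemma snd_real_singleton [Fintype A] (b : B) : ν.snd.real {b} = ∑ a, ν.real {(a, b)} := by
  have : Prod.snd ⁻¹' {b} = ((Finset.univ ×ˢ {b} : Finset (A × B)) : Set (A × B)) := by
    ext ⟨x, y⟩; simp [eq_comm]
  rw [snd, map_measureReal_apply measurable_snd (measurableSet_singleton b), this,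
    ← sum_measureReal_singleton, Finset.sum_product_right, Finset.sum_singleton]

variable [Fintype A] [Fintype B]

lemma sum_real_singleton_mul_fst (f : A → ℝ) :
    ∑ c, ν.real {c} * f c.1 = ∑ a, ν.fst.real {a} * f a := by
  simp only [Fintype.sum_prod_type, ← Finset.sum_mul, fst_real_singleton]

lemma sum_real_singleton_mul_snd (f : B → ℝ) :
    ∑ c, ν.real {c} * f c.2 = ∑ b, ν.snd.real {b} * f b := by
  simp only [Fintype.sum_prod_type_right, ← Finset.sum_mul, snd_real_singleton]

lemma sum_negMulLog_fst_le :
    ∑ a, negMulLog (ν.fst.real {a}) ≤ ∑ c, negMulLog (ν.real {c}) := by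
  rw [Fintype.sum_prod_type]
  gcongr with a
  rw [fst_real_singleton]
  exact negMulLog_sum_le_sum_negMulLog _ fun _ _ => measureReal_nonneg

lemma sum_negMulLog_le_fst_add_snd [IsProbabilityMeasure ν] :
    ∑ c, negMulLog (ν.real {c}) ≤
      ∑ a, negMulLog (ν.fst.real {a}) + ∑ b, negMulLog (ν.snd.real {b}) := by
  have hfst (c : A × B) : ν.real {c} ≤ ν.fst.real {c.1} := by
    rw [fst_real_singleton]
    exact Finset.single_le_sum (f := fun b => ν.real {(c.1, b)}) (fun _ _ => measureReal_nonneg)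
      (Finset.mem_univ c.2)
  have hsnd (c : A × B) : ν.real {c} ≤ ν.snd.real {c.2} := by
    rw [snd_real_singleton]
    exact Finset.single_le_sum (f := fun a => ν.real {(a, c.2)}) (fun _ _ => measureReal_nonneg)
      (Finset.mem_univ c.1)
  have hlog (c : A × B) : ν.real {c} * log (ν.fst.real {c.1} * ν.snd.real {c.2}) =
      ν.real {c} * log (ν.fst.real {c.1}) + ν.real {c} * log (ν.snd.real {c.2}) := by
    rcases measureReal_nonneg.eq_or_lt with h | h
    · rw [← h]
      simp
    rw [log_mul (h.trans_le (hfst c)).ne' (h.trans_le (hsnd c)).ne', mul_add]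
  calc ∑ c, negMulLog (ν.real {c})
      ≤ -∑ c, ν.real {c} * log (ν.fst.real {c.1} * ν.snd.real {c.2}) := by
        refine sum_negMulLog_le_neg_sum_mul_log _ (fun _ _ => measureReal_nonneg)
          (fun _ _ => mul_nonneg measureReal_nonneg measureReal_nonneg) (fun c _ hc => ?_) ?_
        · rcases mul_eq_zero.1 hc with h | h
          · exact le_antisymm (h ▸ hfst c) measureReal_nonneg
          · exact le_antisymm (h ▸ hsnd c) measureReal_nonneg
        · rw [Fintype.sum_prod_type]
          dsimp only
          rw [← Finset.sum_mul_sum]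
          simp
    _ = ∑ a, negMulLog (ν.fst.real {a}) + ∑ b, negMulLog (ν.snd.real {b}) := by
        rw [Finset.sum_congr rfl fun c _ => hlog c, Finset.sum_add_distrib,
          sum_real_singleton_mul_fst ν fun a => log (ν.fst.real {a}),
          sum_real_singleton_mul_snd ν fun b => log (ν.snd.real {b})]
        simp only [negMulLog_eq_neg, Finset.sum_neg_distrib]
        ring

end MeasureTheory.Measure

section Entropy

variable {Ω A B : Type*} [MeasurableSpace Ω] (μ : Measure Ω)
  [Fintype A] [MeasurableSpace A] [MeasurableSingletonClass A]
  [Fintype B] [MeasurableSpace B] [MeasurableSingletonClass B]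
  (X : Ω → A) (Y : Ω → B)

lemma ent_le_ent_pair [IsFiniteMeasure μ] (hY : Measurable Y) :
    ent μ X ≤ ent μ (fun ω => (X ω, Y ω)) := by
  have := (μ.map fun ω => (X ω, Y ω)).sum_negMulLog_fst_le
  rwa [Measure.fst_map_prodMk hY] at this

lemma ent_pair_le_add [IsProbabilityMeasure μ] (hX : Measurable X) (hY : Measurable Y) :
    ent μ (fun ω => (X ω, Y ω)) ≤ ent μ X + ent μ Y := by
  have : IsProbabilityMeasure (μ.map fun ω => (X ω, Y ω)) :=
    Measure.isProbabilityMeasure_map (hX.prodMk hY).aemeasurable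
  have := (μ.map fun ω => (X ω, Y ω)).sum_negMulLog_le_fst_add_snd
  rwa [Measure.fst_map_prodMk hY, Measure.snd_map_prodMk hX] at this

lemma ent_pair_comm (hX : Measurable X) (hY : Measurable Y) :
    ent μ (fun ω => (Y ω, X ω)) = ent μ (fun ω => (X ω, Y ω)) := by
  have hswap : μ.map (fun ω => (Y ω, X ω)) = (μ.map fun ω => (X ω, Y ω)).map Prod.swap :=
    (Measure.map_map measurable_swap (hX.prodMk hY)).symm
  unfold ent
  rw [hswap]
  refine Fintype.sum_equiv (Equiv.prodComm B A) _ _ fun c => ?_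
  have : Prod.swap ⁻¹' {c} = {c.swap} := by
    ext; simp [Prod.swap_eq_iff_eq_swap]
  rw [Measure.map_apply measurable_swap (measurableSet_singleton c), this]
  rfl

end Entropy

theorem stmt_4_general
    {Ω : Type*} [MeasurableSpace Ω] (μ : Measure Ω) [IsProbabilityMeasure μ]
    {SX S1 S2 : Type*}
    [Fintype SX] [MeasurableSpace SX] [MeasurableSingletonClass SX]
    [Fintype S1] [MeasurableSpace S1] [MeasurableSingletonClass S1]
    [Fintype S2] [MeasurableSpace S2] [MeasurableSingletonClass S2]
    (X : Ω → SX) (W₁ : Ω → S1) (W₂ : Ω → S2)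
    (hX : Measurable X) (hW₁ : Measurable W₁) (hW₂ : Measurable W₂)
    (c d : ℝ)
    (hXd : ent μ X = d)
    (hdec : condEnt μ X (fun ω => (W₁ ω, W₂ ω)) = 0)
    (h1 : ent μ W₁ ≤ c) (h2 : ent μ W₂ ≤ d - c) :
    ent μ W₁ = c ∧ ent μ W₂ = d - c ∧ mutInfo μ W₁ W₂ = 0 ∧
      ent μ (fun ω => (W₁ ω, W₂ ω)) = d ∧
      condEnt μ (fun ω => (W₁ ω, W₂ ω)) X = 0 := by
  set W := fun ω => (W₁ ω, W₂ ω)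
  have hW : Measurable W := hW₁.prodMk hW₂
  have hXW : ent μ (fun ω => (X ω, W ω)) = ent μ W := by
    unfold condEnt at hdec
    linarith
  have hmono := ent_le_ent_pair μ X W hW
  have hsub := ent_pair_le_add μ W₁ W₂ hW₁ hW₂
  have hWd : ent μ W = d := by linarith
  refine ⟨by linarith, by linarith, ?_, hWd, ?_⟩
  · unfold mutInfo
    linarith
  · unfold condEnt
    rw [ent_pair_comm μ X W hX hW]
    linarith

theorem stmt_4
    {Ω : Type*} [MeasurableSpace Ω] (μ : Measure Ω) [IsProbabilityMeasure μ]
    {SX S1 S2 : Type*}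
    [Fintype SX] [Nonempty SX] [MeasurableSpace SX] [MeasurableSingletonClass SX]
    [Fintype S1] [Nonempty S1] [MeasurableSpace S1] [MeasurableSingletonClass S1]
    [Fintype S2] [Nonempty S2] [MeasurableSpace S2] [MeasurableSingletonClass S2]
    (X : Ω → SX) (W₁ : Ω → S1) (W₂ : Ω → S2)
    (hX : Measurable X) (hW₁ : Measurable W₁) (hW₂ : Measurable W₂)
    (c d : ℝ) (hc : 0 ≤ c) (hcd : c ≤ d)
    (hXd : ent μ X = d)
    (hdec : condEnt μ X (fun ω => (W₁ ω, W₂ ω)) = 0)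
    (h1 : ent μ W₁ ≤ c) (h2 : ent μ W₂ ≤ d - c) :
    ent μ W₁ = c ∧ ent μ W₂ = d - c ∧ mutInfo μ W₁ W₂ = 0 ∧
      ent μ (fun ω => (W₁ ω, W₂ ω)) = d ∧
      condEnt μ (fun ω => (W₁ ω, W₂ ω)) X = 0 :=
  stmt_4_general μ X W₁ W₂ hX hW₁ hW₂ c d hXd hdec h1 h2
end

section
/- Let X, W1, W3, W4, W5 be random variables on a probability space with values in finite nonempty sets. Suppose H(W1 | X) = 0, I(W3, W4 ; X | W1) = 0, H(W5 | X) = 0, H(W5 | W3, W4) = 0, and H(W5) ≥ H(W1). Then H(W1 | W3, W4) = 0 (W1 can be reconstructed from the pair (W3, W4)). -/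
open MeasureTheory ProbabilityTheory

/-!
Write `Y = (W₃, W₄)`. Since `W₁` is a function of `X` and `Y — W₁ — X` is a Markov chain,
`H(W₁ | Y) = H(W₁) - I(X ; Y)`. Since `W₅` is a function of both `X` and `Y`, it is common
information of the two, so `H(W₅) ≤ I(X ; Y)`. Hence `H(W₁ | Y) ≤ H(W₁) - H(W₅) ≤ 0`.
Both facts are Shannon inequalities: monotonicity of entropy under functions, and submodularity,
which reduces to Gibbs' inequality for the joint law against the product of its marginals.
-/

open Real Finset

theorem Real.negMulLog_add_mul_log_le {p q : ℝ} (hp : 0 ≤ p) (hq : 0 < q) :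
    negMulLog p + p * log q ≤ q - p := by
  rcases hp.eq_or_lt with rfl | hp
  · simpa using hq.le
  have := mul_le_mul_of_nonneg_left (log_le_sub_one_of_pos (div_pos hq hp)) hp.le
  rw [log_div hq.ne' hp.ne', mul_sub_one, mul_div_cancel₀ _ hp.ne'] at this
  rw [negMulLog]
  linarith

theorem Real.negMulLog_sum_le {ι : Type*} (s : Finset ι) (w : ι → ℝ) (hw : ∀ i ∈ s, 0 ≤ w i) :
    negMulLog (∑ i ∈ s, w i) ≤ ∑ i ∈ s, negMulLog (w i) := by
  simp only [negMulLog, neg_mul, Finset.sum_mul, ← Finset.sum_neg_distrib]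
  refine Finset.sum_le_sum fun i hi => neg_le_neg ?_
  rcases (hw i hi).eq_or_lt with h0 | hpos
  · simp [← h0]
  · exact mul_le_mul_of_nonneg_left (log_le_log hpos (single_le_sum hw hi)) hpos.le

theorem Real.sum_negMulLog_add_negMulLog_sum_le {α β : Type*} [Fintype α] [Fintype β]
    (r : α → β → ℝ) (hr : ∀ a b, 0 ≤ r a b) :
    ∑ a, ∑ b, negMulLog (r a b) + negMulLog (∑ a, ∑ b, r a b)
      ≤ ∑ a, negMulLog (∑ b, r a b) + ∑ b, negMulLog (∑ a, r a b) := by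
  set rA := fun a => ∑ b, r a b
  set rB := fun b => ∑ a, r a b
  set t := ∑ a, ∑ b, r a b
  have hrA a b : r a b ≤ rA a := single_le_sum (fun b _ => hr a b) (mem_univ b)
  have hrB a b : r a b ≤ rB b := single_le_sum (fun a _ => hr a b) (mem_univ a)
  have hrt a : rA a ≤ t := single_le_sum (fun a _ => sum_nonneg fun b _ => hr a b) (mem_univ a)
  -- Gibbs' inequality against the product of the marginals `rA a * rB b / t`
  have gibbs a b : negMulLog (r a b) + r a b * (log (rA a) + log (rB b) - log t)
      ≤ rA a * rB b / t - r a b := by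
    rcases (hr a b).eq_or_lt with h0 | hpos
    · rw [← h0]
      simp only [negMulLog_zero, zero_mul, add_zero, sub_zero]
      exact div_nonneg (mul_nonneg ((hr a b).trans (hrA a b)) ((hr a b).trans (hrB a b)))
        ((hr a b).trans ((hrA a b).trans (hrt a)))
    have hA := hpos.trans_le (hrA a b)
    have hB := hpos.trans_le (hrB a b)
    have ht := hA.trans_le (hrt a)
    have := negMulLog_add_mul_log_le hpos.le (by positivity : 0 < rA a * rB b / t)
    rwa [log_div (by positivity) ht.ne', log_mul hA.ne' hB.ne'] at this
  have sum_prod : ∑ a, ∑ b, rA a * rB b / t = t := by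
    have hB : ∑ b, rB b = t := Finset.sum_comm
    simp_rw [mul_div_assoc, ← Finset.mul_sum, ← Finset.sum_mul, ← Finset.sum_div, hB,
      ← mul_div_assoc]
    exact mul_self_div_self t
  have sum_A : ∑ a, ∑ b, r a b * log (rA a) = -∑ a, negMulLog (rA a) := by
    simp [negMulLog, ← Finset.sum_mul, rA]
  have sum_B : ∑ a, ∑ b, r a b * log (rB b) = -∑ b, negMulLog (rB b) := by
    rw [Finset.sum_comm]
    simp [negMulLog, ← Finset.sum_mul, rB]
  have sum_t : ∑ a, ∑ b, r a b * log t = -negMulLog t := by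
    simp [negMulLog, ← Finset.sum_mul, t]
  have := sum_le_sum (s := univ) fun a _ => sum_le_sum (s := univ) fun b _ => gibbs a b
  simp only [mul_sub, mul_add, Finset.sum_add_distrib, Finset.sum_sub_distrib] at this
  linarith

theorem Set.preimage_prodMk_singleton {Ω α β : Type*} (A : Ω → α) (B : Ω → β) (a : α) (b : β) :
    (fun ω => (A ω, B ω)) ⁻¹' {(a, b)} = A ⁻¹' {a} ∩ B ⁻¹' {b} := by
  rw [← Set.singleton_prod_singleton, Set.mk_preimage_prod]

section Entropy

variable {Ω : Type*} [MeasurableSpace Ω] {μ : Measure Ω} [IsFiniteMeasure μ]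
  {α β γ : Type*}
  [Fintype α] [MeasurableSpace α] [MeasurableSingletonClass α]
  [Fintype β] [MeasurableSpace β] [MeasurableSingletonClass β]
  [Fintype γ] [MeasurableSpace γ] [MeasurableSingletonClass γ]

theorem measureReal_eq_sum_inter_preimage (s : Set Ω) {A : Ω → α} (hA : Measurable A) :
    μ.real s = ∑ a, μ.real (s ∩ A ⁻¹' {a}) := by
  simp_rw [Set.inter_comm s, ← measureReal_restrict_apply (hA (measurableSet_singleton _))]
  rw [sum_measureReal_preimage_singleton _ fun a _ => hA (measurableSet_singleton a),
    coe_univ, Set.preimage_univ, measureReal_restrict_apply_univ]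

omit [IsFiniteMeasure μ] in
theorem ent_eq_sum_measureReal {A : Ω → α} (hA : Measurable A) :
    ent μ A = ∑ a, negMulLog (μ.real (A ⁻¹' {a})) := by
  simp only [ent, ← measureReal_def, map_measureReal_apply hA (measurableSet_singleton _)]

theorem ent_comp_le {A : Ω → α} (hA : Measurable A) (f : α → β) :
    ent μ (fun ω => f (A ω)) ≤ ent μ A := by
  classical
  have fiber b : μ.real ((fun ω => f (A ω)) ⁻¹' {b}) = ∑ a with f a = b, μ.real (A ⁻¹' {a}) := by
    rw [sum_measureReal_preimage_singleton _ fun a _ => hA (measurableSet_singleton a)]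
    congr 1
    ext ω
    simp
  have hfA : Measurable fun ω => f (A ω) := (measurable_of_finite f).comp hA
  rw [ent_eq_sum_measureReal hfA, ent_eq_sum_measureReal hA,
    ← Finset.sum_fiberwise univ f]
  refine Finset.sum_le_sum fun b _ => ?_
  rw [fiber]
  exact negMulLog_sum_le _ _ fun a _ => measureReal_nonneg

theorem ent_comp_of_leftInverse {A : Ω → α} (hA : Measurable A) {f : α → β} {g : β → α}
    (hgf : Function.LeftInverse g f) : ent μ (fun ω => f (A ω)) = ent μ A := by
  have hfA : Measurable fun ω => f (A ω) := (measurable_of_finite f).comp hA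
  refine le_antisymm (ent_comp_le hA f) ?_
  simpa only [hgf _] using ent_comp_le (μ := μ) hfA g

theorem ent_prod_comm {A : Ω → α} {B : Ω → β} (hA : Measurable A) (hB : Measurable B) :
    ent μ (fun ω => (A ω, B ω)) = ent μ (fun ω => (B ω, A ω)) :=
  ent_comp_of_leftInverse (μ := μ) (hB.prodMk hA) (g := Prod.swap) Prod.swap_swap

theorem ent_submodular {A : Ω → α} {B : Ω → β} {C : Ω → γ}
    (hA : Measurable A) (hB : Measurable B) (hC : Measurable C) :
    ent μ (fun ω => (C ω, A ω, B ω)) + ent μ C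
      ≤ ent μ (fun ω => (C ω, A ω)) + ent μ (fun ω => (C ω, B ω)) := by
  set p : γ → α → β → ℝ := fun c a b => μ.real (C ⁻¹' {c} ∩ (A ⁻¹' {a} ∩ B ⁻¹' {b}))
  have hCAB : ent μ (fun ω => (C ω, A ω, B ω)) = ∑ c, ∑ a, ∑ b, negMulLog (p c a b) := by
    simp only [ent_eq_sum_measureReal (hC.prodMk (hA.prodMk hB)), Fintype.sum_prod_type,
      Set.preimage_prodMk_singleton, p]
  have hCA : ent μ (fun ω => (C ω, A ω)) = ∑ c, ∑ a, negMulLog (∑ b, p c a b) := by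
    simp only [ent_eq_sum_measureReal (hC.prodMk hA), Fintype.sum_prod_type,
      Set.preimage_prodMk_singleton]
    refine sum_congr rfl fun c _ => sum_congr rfl fun a _ => ?_
    rw [measureReal_eq_sum_inter_preimage _ hB]
    simp only [Set.inter_assoc, p]
  have hCB : ent μ (fun ω => (C ω, B ω)) = ∑ c, ∑ b, negMulLog (∑ a, p c a b) := by
    simp only [ent_eq_sum_measureReal (hC.prodMk hB), Fintype.sum_prod_type,
      Set.preimage_prodMk_singleton]
    refine sum_congr rfl fun c _ => sum_congr rfl fun b _ => ?_
    rw [measureReal_eq_sum_inter_preimage _ hA]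
    simp only [Set.inter_assoc, Set.inter_comm (B ⁻¹' _), p]
  have hC : ent μ C = ∑ c, negMulLog (∑ a, ∑ b, p c a b) := by
    refine (ent_eq_sum_measureReal hC).trans (sum_congr rfl fun c _ => ?_)
    rw [measureReal_eq_sum_inter_preimage _ hA]
    refine congrArg negMulLog (sum_congr rfl fun a _ => ?_)
    rw [measureReal_eq_sum_inter_preimage _ hB]
    simp only [Set.inter_assoc, p]
  simp only [hCAB, hCA, hCB, hC, ← Finset.sum_add_distrib]
  exact Finset.sum_le_sum fun c _ =>
    sum_negMulLog_add_negMulLog_sum_le (p c) fun _ _ => measureReal_nonneg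

theorem condEnt_nonneg {A : Ω → α} {B : Ω → β} (hA : Measurable A) (hB : Measurable B) :
    0 ≤ condEnt μ A B :=
  sub_nonneg.2 (ent_comp_le (hA.prodMk hB) Prod.snd)

theorem condEnt_prod_le {A : Ω → α} {B : Ω → β} {C : Ω → γ}
    (hA : Measurable A) (hB : Measurable B) (hC : Measurable C) :
    condEnt μ A (fun ω => (B ω, C ω)) ≤ condEnt μ A C := by
  have hABC : ent μ (fun ω => (A ω, B ω, C ω)) = ent μ (fun ω => (C ω, A ω, B ω)) :=
    ent_comp_of_leftInverse (hC.prodMk (hA.prodMk hB))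
      (f := fun x => (x.2.1, x.2.2, x.1)) (g := fun x => (x.2.2, x.1, x.2.1)) fun _ => rfl
  have := ent_submodular (μ := μ) hA hB hC
  rw [condEnt, condEnt, hABC, ent_prod_comm hA hC, ent_prod_comm hB hC]
  linarith

theorem ent_le_mutInfo_of_condEnt_eq_zero {W : Ω → α} {X : Ω → β} {Y : Ω → γ}
    (hW : Measurable W) (hX : Measurable X) (hY : Measurable Y)
    (hWX : condEnt μ W X = 0) (hWY : condEnt μ W Y = 0) :
    ent μ W ≤ mutInfo μ X Y := by
  have hcond := condEnt_prod_le (μ := μ) hX hY hW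
  have hmono : ent μ (fun ω => (X ω, Y ω)) ≤ ent μ (fun ω => (X ω, Y ω, W ω)) :=
    ent_comp_le (hX.prodMk (hY.prodMk hW)) fun x => (x.1, x.2.1)
  simp only [condEnt, mutInfo] at hWX hWY hcond ⊢
  linarith [ent_prod_comm (μ := μ) hX hW, ent_prod_comm (μ := μ) hY hW]

theorem condEnt_eq_ent_sub_mutInfo_of_condMutInfo_eq_zero {W : Ω → α} {X : Ω → β} {Y : Ω → γ}
    (hW : Measurable W) (hX : Measurable X) (hY : Measurable Y)
    (hWX : condEnt μ W X = 0) (hmarkov : condMutInfo μ Y X W = 0) :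
    condEnt μ W Y = ent μ W - mutInfo μ X Y := by
  have hcond := condEnt_prod_le (μ := μ) hW hY hX
  have hmono : ent μ (fun ω => (Y ω, X ω)) ≤ ent μ (fun ω => ((Y ω, X ω), W ω)) :=
    ent_comp_le ((hY.prodMk hX).prodMk hW) Prod.fst
  simp only [condEnt, condMutInfo, mutInfo] at hWX hcond hmarkov ⊢
  linarith [ent_prod_comm (μ := μ) (hY.prodMk hX) hW, ent_prod_comm (μ := μ) hY hX,
    ent_prod_comm (μ := μ) hX hW, ent_prod_comm (μ := μ) hY hW]

end Entropy

theorem stmt_7_general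
    {Ω : Type*} [MeasurableSpace Ω] (μ : Measure Ω) [IsProbabilityMeasure μ]
    {SX S1 S3 S4 S5 : Type*}
    [Fintype SX] [MeasurableSpace SX] [MeasurableSingletonClass SX]
    [Fintype S1] [MeasurableSpace S1] [MeasurableSingletonClass S1]
    [Fintype S3] [MeasurableSpace S3] [MeasurableSingletonClass S3]
    [Fintype S4] [MeasurableSpace S4] [MeasurableSingletonClass S4]
    [Fintype S5] [MeasurableSpace S5] [MeasurableSingletonClass S5]
    (X : Ω → SX) (W₁ : Ω → S1) (W₃ : Ω → S3) (W₄ : Ω → S4) (W₅ : Ω → S5)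
    (hX : Measurable X) (hW₁ : Measurable W₁) (hW₃ : Measurable W₃)
    (hW₄ : Measurable W₄) (hW₅ : Measurable W₅)
    (h1 : condEnt μ W₁ X = 0)
    (hmarkov : condMutInfo μ (fun ω => (W₃ ω, W₄ ω)) X W₁ = 0)
    (h5X : condEnt μ W₅ X = 0)
    (h5dec : condEnt μ W₅ (fun ω => (W₃ ω, W₄ ω)) = 0)
    (hent : ent μ W₅ ≥ ent μ W₁) :
    condEnt μ W₁ (fun ω => (W₃ ω, W₄ ω)) = 0 := by
  have hY : Measurable fun ω => (W₃ ω, W₄ ω) := hW₃.prodMk hW₄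
  refine le_antisymm ?_ (condEnt_nonneg hW₁ hY)
  rw [condEnt_eq_ent_sub_mutInfo_of_condMutInfo_eq_zero hW₁ hX hY h1 hmarkov]
  linarith [ent_le_mutInfo_of_condEnt_eq_zero hW₅ hX hY h5X h5dec]

theorem stmt_7
    {Ω : Type*} [MeasurableSpace Ω] (μ : Measure Ω) [IsProbabilityMeasure μ]
    {SX S1 S3 S4 S5 : Type*}
    [Fintype SX] [Nonempty SX] [MeasurableSpace SX] [MeasurableSingletonClass SX]
    [Fintype S1] [Nonempty S1] [MeasurableSpace S1] [MeasurableSingletonClass S1]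
    [Fintype S3] [Nonempty S3] [MeasurableSpace S3] [MeasurableSingletonClass S3]
    [Fintype S4] [Nonempty S4] [MeasurableSpace S4] [MeasurableSingletonClass S4]
    [Fintype S5] [Nonempty S5] [MeasurableSpace S5] [MeasurableSingletonClass S5]
    (X : Ω → SX) (W₁ : Ω → S1) (W₃ : Ω → S3) (W₄ : Ω → S4) (W₅ : Ω → S5)
    (hX : Measurable X) (hW₁ : Measurable W₁) (hW₃ : Measurable W₃)
    (hW₄ : Measurable W₄) (hW₅ : Measurable W₅)
    (h1 : condEnt μ W₁ X = 0)
    (hmarkov : condMutInfo μ (fun ω => (W₃ ω, W₄ ω)) X W₁ = 0)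
    (h5X : condEnt μ W₅ X = 0)
    (h5dec : condEnt μ W₅ (fun ω => (W₃ ω, W₄ ω)) = 0)
    (hent : ent μ W₅ ≥ ent μ W₁) :
    condEnt μ W₁ (fun ω => (W₃ ω, W₄ ω)) = 0 :=
  stmt_7_general μ X W₁ W₃ W₄ W₅ hX hW₁ hW₃ hW₄ hW₅ h1 hmarkov h5X h5dec hent
end

section
/- Let K, W1, W3, W4 be random variables on a probability space with values in finite nonempty sets. Suppose I(W1 ; W3) = 0, H(W1 | K, W3) = 0, H(W1 | W3, W4) = 0, I(W1 ; K, W4) = 0, H(K) ≤ H(W1), H(W4) ≤ H(W1), and H(W3) ≤ H(W1). Then H(K) = H(W4) = H(W1), H(K | W4) = 0, and H(W4 | K) = 0. (Core of Proposition 1: under the capacity and independence constraints of the secure network G⋆, admissibility forces the key K at node P0 to be a deterministic function of the message W4 delivered to node P1, i.e., a secret key of rate H(W1) is transmitted from P0 to P1.) -/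
open MeasureTheory ProbabilityTheory

/-!
If `W₁` is independent of `W₃` and determined by `(V, W₃)`, then
`H(W₁) + H(W₃) = H(W₁, W₃) ≤ H(V, W₃) ≤ H(V) + H(W₃)`, so `H(V) ≥ H(W₁)`; with `H(V) ≤ H(W₁)` all
these are equalities and `H(W₁, W₃, V) = H(W₁) + H(W₃)`. This applies to `V = K` and to `V = W₄`.
Submodularity over `(W₁, W₃)` then gives `H(W₁, W₃, K, W₄) ≤ H(W₁) + H(W₃)`, and independence of
`W₁` from `(K, W₄)` turns this into `H(K, W₄) ≤ H(W₃) ≤ H(W₁) = H(K) = H(W₄)`: each of `K`, `W₄`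
determines the other.

Subadditivity and submodularity are proved from Gibbs' inequality, the latter fibrewise over the
conditioning variable.
-/

open Finset

namespace Real

lemma negMulLog_sum_le_sum_negMulLog {ι : Type*} {s : Finset ι} {f : ι → ℝ}
    (hf : ∀ i ∈ s, 0 ≤ f i) : negMulLog (∑ i ∈ s, f i) ≤ ∑ i ∈ s, negMulLog (f i) := by
  rw [negMulLog, neg_mul, sum_mul, ← sum_neg_distrib]
  refine sum_le_sum fun i hi => ?_
  rcases (hf i hi).eq_or_lt with h | h
  · simp [← h]
  · rw [negMulLog, neg_mul, neg_le_neg_iff]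
    exact mul_le_mul_of_nonneg_left (log_le_log h (single_le_sum hf hi)) h.le

lemma sum_negMulLog_le_sum_neg_mul_log {α : Type*} [Fintype α] {p q : α → ℝ}
    (hp : ∀ a, 0 ≤ p a) (hq : ∀ a, 0 ≤ q a) (hpq : ∀ a, p a ≠ 0 → q a ≠ 0)
    (hsum : ∑ a, q a ≤ ∑ a, p a) :
    ∑ a, negMulLog (p a) ≤ ∑ a, -(p a * log (q a)) := by
  have hterm : ∀ a, negMulLog (p a) ≤ -(p a * log (q a)) + (q a - p a) := fun a => by
    rcases (hp a).eq_or_lt with h | h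
    · simp [← h, hq a]
    · have hqa : 0 < q a := (hq a).lt_of_ne' (hpq a h.ne')
      have hlog := mul_le_mul_of_nonneg_left (log_le_sub_one_of_pos (div_pos hqa h)) h.le
      rw [log_div hqa.ne' h.ne', mul_sub, mul_sub, mul_div_cancel₀ _ h.ne', mul_one] at hlog
      rw [negMulLog, neg_mul]
      linarith
  calc ∑ a, negMulLog (p a) ≤ ∑ a, (-(p a * log (q a)) + (q a - p a)) :=
        sum_le_sum fun a _ => hterm a
    _ ≤ ∑ a, -(p a * log (q a)) := by
        rw [sum_add_distrib, sum_sub_distrib]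
        linarith

/-- `H(T, U) + H(∅) ≤ H(T) + H(U)` for a mass distribution `f` that need not be normalised, so that
it can be applied on each fibre of a third variable. -/
lemma sum_negMulLog_add_negMulLog_sum_le_s11 {T U : Type*} [Fintype T] [Fintype U]
    {f : T × U → ℝ} (hf : ∀ a, 0 ≤ f a) :
    ∑ a, negMulLog (f a) + negMulLog (∑ a, f a) ≤
      ∑ t, negMulLog (∑ u, f (t, u)) + ∑ u, negMulLog (∑ t, f (t, u)) := by
  set r : T → ℝ := fun t => ∑ u, f (t, u)
  set c : U → ℝ := fun u => ∑ t, f (t, u)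
  set m := ∑ a, f a with hm
  rcases (sum_nonneg fun a _ => hf a : 0 ≤ m).eq_or_lt with hm0 | hm0
  · have hzero : ∀ a, f a = 0 := fun a =>
      (sum_eq_zero_iff_of_nonneg fun a _ => hf a).1 hm0.symm a (mem_univ a)
    simp [m, hzero]
  have hfr : ∀ a, f a ≤ r a.1 := fun a =>
    single_le_sum (f := fun u => f (a.1, u)) (fun u _ => hf _) (mem_univ a.2)
  have hfc : ∀ a, f a ≤ c a.2 := fun a =>
    single_le_sum (f := fun t => f (t, a.2)) (fun t _ => hf _) (mem_univ a.1)
  have hrm : ∑ t, r t = m := (Fintype.sum_prod_type f).symm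
  have hcm : ∑ u, c u = m := (Fintype.sum_prod_type_right f).symm
  set q : T × U → ℝ := fun a => r a.1 * c a.2 / m with hq
  have hq_sum : ∑ a, q a = m := by
    rw [Fintype.sum_prod_type]
    simp only [q, ← sum_div, ← mul_sum, ← sum_mul, hrm, hcm]
    field_simp
  have hlog : ∀ a, -(f a * log (q a)) = -(f a * log (r a.1)) - f a * log (c a.2) + f a * log m := by
    intro a
    rcases (hf a).eq_or_lt with h | h
    · simp [← h]
    · have hra := h.trans_le (hfr a)
      have hca := h.trans_le (hfc a)
      rw [hq, log_div (by positivity) hm0.ne', log_mul hra.ne' hca.ne']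
      ring
  have hq_nonneg : ∀ a, 0 ≤ q a := fun a =>
    div_nonneg (mul_nonneg ((hf a).trans (hfr a)) ((hf a).trans (hfc a))) hm0.le
  have hq_ne : ∀ a, f a ≠ 0 → q a ≠ 0 := fun a h => by
    have h' := (hf a).lt_of_ne' h
    exact (div_pos (mul_pos (h'.trans_le (hfr a)) (h'.trans_le (hfc a))) hm0).ne'
  have hcross : ∑ a, -(f a * log (q a)) =
      ∑ t, negMulLog (r t) + ∑ u, negMulLog (c u) - negMulLog m := by
    have hT : ∑ a : T × U, f a * log (r a.1) = ∑ t, r t * log (r t) := by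
      rw [Fintype.sum_prod_type]; simp only [r, sum_mul]
    have hU : ∑ a : T × U, f a * log (c a.2) = ∑ u, c u * log (c u) := by
      rw [Fintype.sum_prod_type_right]; simp only [c, sum_mul]
    simp only [hlog, sum_add_distrib, sum_sub_distrib, sum_neg_distrib, ← sum_mul, hT, hU,
      negMulLog, neg_mul, ← hm]
    ring
  linarith [sum_negMulLog_le_sum_neg_mul_log hf hq_nonneg hq_ne hq_sum.le]

end Real

open Real

section Entropy

variable {Ω : Type*} [MeasurableSpace Ω] {μ : Measure Ω}
  {S T U : Type*}
  [Fintype S] [MeasurableSpace S] [MeasurableSingletonClass S]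
  [Fintype T] [MeasurableSpace T] [MeasurableSingletonClass T]
  [Fintype U] [MeasurableSpace U] [MeasurableSingletonClass U]

lemma ent_eq_sum_negMulLog_measureReal {X : Ω → S} (hX : Measurable X) :
    ent μ X = ∑ s, negMulLog (μ.real (X ⁻¹' {s})) := by
  simp only [ent, ← measureReal_def, map_measureReal_apply hX (measurableSet_singleton _)]

lemma measureReal_eq_sum_measureReal_inter_preimage [IsFiniteMeasure μ] (A : Set Ω)
    {Y : Ω → T} (hY : Measurable Y) : μ.real A = ∑ t, μ.real (A ∩ Y ⁻¹' {t}) := by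
  have h := sum_measureReal_preimage_singleton (μ := μ.restrict A) univ
    (fun t _ => hY (measurableSet_singleton t))
  simpa [measureReal_restrict_apply (hY (measurableSet_singleton _)), Set.inter_comm] using h.symm

lemma measureReal_preimage_comp [IsFiniteMeasure μ] {β : Type*} [DecidableEq β] {X : Ω → S}
    (hX : Measurable X) (g : S → β) (b : β) :
    μ.real ((fun ω => g (X ω)) ⁻¹' {b}) = ∑ s with g s = b, μ.real (X ⁻¹' {s}) := by
  rw [sum_measureReal_preimage_singleton _ fun s _ => hX (measurableSet_singleton s)]
  congr 1
  ext ω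
  simp

lemma ent_comp_le_s11 [IsFiniteMeasure μ] {X : Ω → S} (hX : Measurable X) (g : S → T) :
    ent μ (fun ω => g (X ω)) ≤ ent μ X := by
  classical
  have hgX : Measurable fun ω => g (X ω) := (measurable_of_countable g).comp hX
  rw [ent_eq_sum_negMulLog_measureReal hgX,
    ent_eq_sum_negMulLog_measureReal hX, ← sum_fiberwise univ g]
  refine sum_le_sum fun t _ => ?_
  rw [measureReal_preimage_comp hX g t]
  exact negMulLog_sum_le_sum_negMulLog fun s _ => measureReal_nonneg

lemma ent_eq_of_comp [IsFiniteMeasure μ] {X : Ω → S} {Y : Ω → T} (hX : Measurable X)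
    (hY : Measurable Y) (f : S → T) (g : T → S) (hf : Y = f ∘ X) (hg : X = g ∘ Y) :
    ent μ X = ent μ Y := by
  apply le_antisymm
  · rw [hg]; exact ent_comp_le_s11 hY g
  · rw [hf]; exact ent_comp_le_s11 hX f

lemma ent_prod_comm_s11 [IsFiniteMeasure μ] {X : Ω → S} {Y : Ω → T} (hX : Measurable X)
    (hY : Measurable Y) : ent μ (fun ω => (X ω, Y ω)) = ent μ (fun ω => (Y ω, X ω)) :=
  ent_eq_of_comp (hX.prodMk hY) (hY.prodMk hX) Prod.swap Prod.swap rfl rfl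

lemma ent_le_ent_prod [IsFiniteMeasure μ] {X : Ω → S} {Y : Ω → T} (hX : Measurable X)
    (hY : Measurable Y) : ent μ X ≤ ent μ (fun ω => (X ω, Y ω)) :=
  ent_comp_le_s11 (hX.prodMk hY) Prod.fst

lemma ent_prod_add_ent_le [IsFiniteMeasure μ] {X : Ω → S} {Y : Ω → T} {Z : Ω → U}
    (hX : Measurable X) (hY : Measurable Y) (hZ : Measurable Z) :
    ent μ (fun ω => (X ω, Y ω, Z ω)) + ent μ X ≤
      ent μ (fun ω => (X ω, Y ω)) + ent μ (fun ω => (X ω, Z ω)) := by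
  set p : S × T × U → ℝ := fun a => μ.real ((fun ω => (X ω, Y ω, Z ω)) ⁻¹' {a})
  have hX_marg : ∀ s, μ.real (X ⁻¹' {s}) = ∑ b : T × U, p (s, b) := fun s => by
    rw [measureReal_eq_sum_measureReal_inter_preimage _ (hY.prodMk hZ)]
    congr! 2 with b
    ext ω
    simp
  have hXY_marg : ∀ s t, μ.real ((fun ω => (X ω, Y ω)) ⁻¹' {(s, t)}) = ∑ u, p (s, t, u) :=
    fun s t => by
      rw [measureReal_eq_sum_measureReal_inter_preimage _ hZ]
      congr! 2 with u
      ext ω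
      simp [and_assoc]
  have hXZ_marg : ∀ s u, μ.real ((fun ω => (X ω, Z ω)) ⁻¹' {(s, u)}) = ∑ t, p (s, t, u) :=
    fun s u => by
      rw [measureReal_eq_sum_measureReal_inter_preimage _ hY]
      congr! 2 with t
      ext ω
      simp only [Set.mem_inter_iff, Set.mem_preimage, Set.mem_singleton_iff, Prod.mk.injEq]
      tauto
  rw [ent_eq_sum_negMulLog_measureReal (hX.prodMk (hY.prodMk hZ)),
    ent_eq_sum_negMulLog_measureReal hX, ent_eq_sum_negMulLog_measureReal (hX.prodMk hY),
    ent_eq_sum_negMulLog_measureReal (hX.prodMk hZ), Fintype.sum_prod_type, Fintype.sum_prod_type,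
    Fintype.sum_prod_type, ← sum_add_distrib, ← sum_add_distrib]
  refine sum_le_sum fun s _ => ?_
  simp only [hX_marg, hXY_marg, hXZ_marg]
  exact sum_negMulLog_add_negMulLog_sum_le_s11 fun _ => measureReal_nonneg

lemma ent_unit_prod [IsFiniteMeasure μ] {X : Ω → S} (hX : Measurable X) :
    ent μ (fun ω => ((), X ω)) = ent μ X :=
  ent_eq_of_comp (measurable_const.prodMk hX) hX Prod.snd (fun a => ((), a)) rfl rfl

lemma ent_prod_le_add [IsProbabilityMeasure μ] {Y : Ω → T} {Z : Ω → U} (hY : Measurable Y)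
    (hZ : Measurable Z) : ent μ (fun ω => (Y ω, Z ω)) ≤ ent μ Y + ent μ Z := by
  have hc : Measurable fun _ : Ω => () := measurable_const
  have h := ent_prod_add_ent_le (μ := μ) hc hY hZ
  rw [ent_unit_prod (hY.prodMk hZ), ent_unit_prod hY, ent_unit_prod hZ,
    ent_eq_sum_negMulLog_measureReal hc] at h
  simpa using h

lemma condEnt_prod_comm [IsFiniteMeasure μ] {X : Ω → S} {Y : Ω → T} {Z : Ω → U}
    (hX : Measurable X) (hY : Measurable Y) (hZ : Measurable Z) :
    condEnt μ X (fun ω => (Y ω, Z ω)) = condEnt μ X (fun ω => (Z ω, Y ω)) := by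
  rw [condEnt, condEnt, ent_prod_comm_s11 hY hZ,
    ent_eq_of_comp (hX.prodMk (hY.prodMk hZ)) (hX.prodMk (hZ.prodMk hY))
      (fun a => (a.1, a.2.swap)) (fun a => (a.1, a.2.swap)) rfl rfl]

lemma ent_eq_of_mutInfo_eq_zero_of_condEnt_eq_zero [IsProbabilityMeasure μ] {W : Ω → S}
    {W' : Ω → T} {V : Ω → U} (hW : Measurable W) (hW' : Measurable W') (hV : Measurable V)
    (hindep : mutInfo μ W W' = 0) (hdet : condEnt μ W (fun ω => (V ω, W' ω)) = 0)
    (hle : ent μ V ≤ ent μ W) :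
    ent μ V = ent μ W ∧ ent μ (fun ω => ((W ω, W' ω), V ω)) = ent μ W + ent μ W' := by
  rw [mutInfo] at hindep
  rw [condEnt] at hdet
  have h_proj : ent μ (fun ω => (W ω, W' ω)) ≤ ent μ (fun ω => (W ω, V ω, W' ω)) :=
    ent_comp_le_s11 (hW.prodMk (hV.prodMk hW')) fun a => (a.1, a.2.2)
  have h_sub := ent_prod_le_add (μ := μ) hV hW'
  have h_relabel : ent μ (fun ω => (W ω, V ω, W' ω)) = ent μ (fun ω => ((W ω, W' ω), V ω)) :=
    ent_eq_of_comp (hW.prodMk (hV.prodMk hW')) ((hW.prodMk hW').prodMk hV)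
      (fun a => ((a.1, a.2.2), a.2.1)) (fun a => (a.1.1, a.2, a.1.2)) rfl rfl
  have h_mono := ent_le_ent_prod (μ := μ) (hW.prodMk hW') hV
  constructor <;> linarith

end Entropy

theorem stmt_11_general
    {Ω : Type*} [MeasurableSpace Ω] (μ : Measure Ω) [IsProbabilityMeasure μ]
    {SK S1 S3 S4 : Type*}
    [Fintype SK] [MeasurableSpace SK] [MeasurableSingletonClass SK]
    [Fintype S1] [MeasurableSpace S1] [MeasurableSingletonClass S1]
    [Fintype S3] [MeasurableSpace S3] [MeasurableSingletonClass S3]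
    [Fintype S4] [MeasurableSpace S4] [MeasurableSingletonClass S4]
    (K : Ω → SK) (W₁ : Ω → S1) (W₃ : Ω → S3) (W₄ : Ω → S4)
    (hK : Measurable K) (hW₁ : Measurable W₁) (hW₃ : Measurable W₃) (hW₄ : Measurable W₄)
    (h13 : mutInfo μ W₁ W₃ = 0)
    (hK3 : condEnt μ W₁ (fun ω => (K ω, W₃ ω)) = 0)
    (h34 : condEnt μ W₁ (fun ω => (W₃ ω, W₄ ω)) = 0)
    (hind : mutInfo μ W₁ (fun ω => (K ω, W₄ ω)) = 0)
    (hKle : ent μ K ≤ ent μ W₁)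
    (hW₄le : ent μ W₄ ≤ ent μ W₁)
    (hW₃le : ent μ W₃ ≤ ent μ W₁) :
    ent μ K = ent μ W₁ ∧ ent μ W₄ = ent μ W₁ ∧
      condEnt μ K W₄ = 0 ∧ condEnt μ W₄ K = 0 := by
  rw [condEnt_prod_comm hW₁ hW₃ hW₄] at h34
  obtain ⟨hK_eq, hK_joint⟩ :=
    ent_eq_of_mutInfo_eq_zero_of_condEnt_eq_zero hW₁ hW₃ hK h13 hK3 hKle
  obtain ⟨hW₄_eq, hW₄_joint⟩ :=
    ent_eq_of_mutInfo_eq_zero_of_condEnt_eq_zero hW₁ hW₃ hW₄ h13 h34 hW₄le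
  have h_sub := ent_prod_add_ent_le (μ := μ) (hW₁.prodMk hW₃) hK hW₄
  have h_proj : ent μ (fun ω => (W₁ ω, K ω, W₄ ω)) ≤ ent μ (fun ω => ((W₁ ω, W₃ ω), K ω, W₄ ω)) :=
    ent_comp_le_s11 ((hW₁.prodMk hW₃).prodMk (hK.prodMk hW₄)) fun a => (a.1.1, a.2)
  have hK_le := ent_le_ent_prod (μ := μ) hK hW₄
  have hW₄_le : ent μ W₄ ≤ ent μ (fun ω => (K ω, W₄ ω)) := ent_comp_le_s11 (hK.prodMk hW₄) Prod.snd
  rw [mutInfo] at h13 hind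
  rw [condEnt, condEnt, ent_prod_comm_s11 hW₄ hK]
  refine ⟨hK_eq, hW₄_eq, ?_, ?_⟩ <;> linarith

theorem stmt_11
    {Ω : Type*} [MeasurableSpace Ω] (μ : Measure Ω) [IsProbabilityMeasure μ]
    {SK S1 S3 S4 : Type*}
    [Fintype SK] [Nonempty SK] [MeasurableSpace SK] [MeasurableSingletonClass SK]
    [Fintype S1] [Nonempty S1] [MeasurableSpace S1] [MeasurableSingletonClass S1]
    [Fintype S3] [Nonempty S3] [MeasurableSpace S3] [MeasurableSingletonClass S3]
    [Fintype S4] [Nonempty S4] [MeasurableSpace S4] [MeasurableSingletonClass S4]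
    (K : Ω → SK) (W₁ : Ω → S1) (W₃ : Ω → S3) (W₄ : Ω → S4)
    (hK : Measurable K) (hW₁ : Measurable W₁) (hW₃ : Measurable W₃) (hW₄ : Measurable W₄)
    (h13 : mutInfo μ W₁ W₃ = 0)
    (hK3 : condEnt μ W₁ (fun ω => (K ω, W₃ ω)) = 0)
    (h34 : condEnt μ W₁ (fun ω => (W₃ ω, W₄ ω)) = 0)
    (hind : mutInfo μ W₁ (fun ω => (K ω, W₄ ω)) = 0)
    (hKle : ent μ K ≤ ent μ W₁)
    (hW₄le : ent μ W₄ ≤ ent μ W₁)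
    (hW₃le : ent μ W₃ ≤ ent μ W₁) :
    ent μ K = ent μ W₁ ∧ ent μ W₄ = ent μ W₁ ∧
      condEnt μ K W₄ = 0 ∧ condEnt μ W₄ K = 0 :=
  stmt_11_general μ K W₁ W₃ W₄ hK hW₁ hW₃ hW₄ h13 hK3 h34 hind hKle hW₄le hW₃le
end
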